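/- Let X, X_1, X_2, X_{12} be jointly distributed finite random variables such that X_{12} = f(X_1, X_2, Z) for some Z independent of (X_1, X_2) with X − (X_1, X_2, X_{12}) − Z a Markov chain. Then, setting X'_2 = (X_2, Z): I(X; X_2, X_{12} | X_1) = I(X; X'_2 | X_1) and I(X_1; X_2) = I(X_1; X'_2). Consequently the rate pair R_1 = I(X; X_1), R_2 = I(X; X_2, X_{12}|X_1) + I(X_1; X_2) can be rewritten as R_1 = I(X; X_1), R_2 = I(X; X_1, X'_2) − I(X; X_1) + I(X_1; X'_2). -/
import Mathlib


open scoped BigOperators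

namespace MDC

structure FinProb (Ω : Type*) [Fintype Ω] where
  μ : Ω → ℝ
  nonneg : ∀ ω, 0 ≤ μ ω
  sum_one : ∑ ω, μ ω = 1

variable {Ω : Type*} [Fintype Ω]

/-- Probability that the random variable `f` takes the value `a`. -/
noncomputable def pr (P : FinProb Ω) {A : Type*} [DecidableEq A] (f : Ω → A) (a : A) : ℝ :=
  ∑ ω, if f ω = a then P.μ ω else 0

/-- Shannon entropy (base 2) of a finite random variable. -/
noncomputable def H (P : FinProb Ω) {A : Type*} [Fintype A] [DecidableEq A] (f : Ω → A) : ℝ :=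
  - ∑ a, pr P f a * Real.logb 2 (pr P f a)

/-- Conditional entropy H(f|g). -/
noncomputable def Hcond (P : FinProb Ω) {A B : Type*} [Fintype A] [DecidableEq A]
    [Fintype B] [DecidableEq B] (f : Ω → A) (g : Ω → B) : ℝ :=
  H P (fun ω => (f ω, g ω)) - H P g

/-- Mutual information I(f;g). -/
noncomputable def MI (P : FinProb Ω) {A B : Type*} [Fintype A] [DecidableEq A]
    [Fintype B] [DecidableEq B] (f : Ω → A) (g : Ω → B) : ℝ :=
  H P f + H P g - H P (fun ω => (f ω, g ω))

/-- Conditional mutual information I(f;g|h). -/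
noncomputable def CMI (P : FinProb Ω) {A B C : Type*} [Fintype A] [DecidableEq A]
    [Fintype B] [DecidableEq B] [Fintype C] [DecidableEq C]
    (f : Ω → A) (g : Ω → B) (h : Ω → C) : ℝ :=
  H P (fun ω => (f ω, h ω)) + H P (fun ω => (g ω, h ω))
    - H P (fun ω => (f ω, g ω, h ω)) - H P h

/-- Independence of two finite random variables. -/
def Indep (P : FinProb Ω) {A B : Type*} [DecidableEq A] [DecidableEq B]
    (f : Ω → A) (g : Ω → B) : Prop :=
  ∀ a b, pr P (fun ω => (f ω, g ω)) (a, b) = pr P f a * pr P g b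

/-- Conditional independence of `f` and `g` given `h` (a Markov chain f − h − g). -/
def CondIndep (P : FinProb Ω) {A B C : Type*} [DecidableEq A] [DecidableEq B] [DecidableEq C]
    (f : Ω → A) (g : Ω → B) (h : Ω → C) : Prop :=
  ∀ a b c, pr P h c * pr P (fun ω => (f ω, g ω, h ω)) (a, b, c) =
    pr P (fun ω => (f ω, h ω)) (a, c) * pr P (fun ω => (g ω, h ω)) (b, c)

/-- Binary entropy function. -/
noncomputable def Hb (p : ℝ) : ℝ := -(p * Real.logb 2 p) - (1 - p) * Real.logb 2 (1 - p)

/-- Expected Hamming distortion between two random variables. -/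
noncomputable def Edist (P : FinProb Ω) {A : Type*} [DecidableEq A] (f g : Ω → A) : ℝ :=
  ∑ ω, P.μ ω * (if f ω = g ω then 0 else 1)

end MDC

open MDC
namespace MDC

variable {Ω : Type*} [Fintype Ω] (P : FinProb Ω)
variable {A B C D : Type*} [Fintype A] [DecidableEq A] [Fintype B] [DecidableEq B]
  [Fintype C] [DecidableEq C] [Fintype D] [DecidableEq D]

lemma pr_nonneg (f : Ω → A) (a : A) : 0 ≤ pr P f a := by
  unfold pr; apply Finset.sum_nonneg; intro ω _
  split
  · exact P.nonneg ω
  · exact le_rfl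

lemma sum_pr (f : Ω → A) : ∑ a, pr P f a = 1 := by
  unfold pr
  rw [Finset.sum_comm]
  simp [P.sum_one]

lemma pr_marg_snd (f : Ω → A) (g : Ω → B) (b : B) :
    ∑ a, pr P (fun ω => (f ω, g ω)) (a, b) = pr P g b := by
  unfold pr
  rw [Finset.sum_comm]
  refine Finset.sum_congr rfl fun ω _ => ?_
  by_cases h2 : g ω = b <;> simp [Prod.ext_iff, h2]

lemma pr_marg_fst (f : Ω → A) (g : Ω → B) (a : A) :
    ∑ b, pr P (fun ω => (f ω, g ω)) (a, b) = pr P f a := by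
  unfold pr
  rw [Finset.sum_comm]
  refine Finset.sum_congr rfl fun ω _ => ?_
  by_cases h1 : f ω = a <;> simp [Prod.ext_iff, h1]

lemma pr_marg_mid (f : Ω → A) (g : Ω → B) (h : Ω → C) (a : A) (c : C) :
    ∑ b, pr P (fun ω => (f ω, g ω, h ω)) (a, b, c) = pr P (fun ω => (f ω, h ω)) (a, c) := by
  unfold pr
  rw [Finset.sum_comm]
  refine Finset.sum_congr rfl fun ω _ => ?_
  by_cases h1 : f ω = a <;> by_cases h2 : h ω = c <;> simp [Prod.ext_iff, h1, h2]

end MDC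
namespace MDC
set_option linter.unusedSectionVars false

variable {Ω : Type*} [Fintype Ω] (P : FinProb Ω)
variable {A B C : Type*} [Fintype A] [DecidableEq A] [Fintype B] [DecidableEq B]
  [Fintype C] [DecidableEq C]

lemma H_comp_inj (e : A → B) (he : Function.Injective e) (f : Ω → A) :
    H P (fun ω => e (f ω)) = H P f := by
  unfold H
  congr 1
  rw [← Finset.sum_subset (Finset.subset_univ ((Finset.univ : Finset A).image e))]
  · rw [Finset.sum_image (fun x _ y _ h => he h)]
    refine Finset.sum_congr rfl fun a _ => ?_
    have : pr P (fun ω => e (f ω)) (e a) = pr P f a := by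
      unfold pr; simp [he.eq_iff]
    rw [this]
  · intro b _ hb
    have : pr P (fun ω => e (f ω)) b = 0 := by
      unfold pr
      refine Finset.sum_eq_zero fun ω _ => ?_
      have : e (f ω) ≠ b := fun h => hb (Finset.mem_image.2 ⟨f ω, Finset.mem_univ _, h⟩)
      simp [this]
    rw [this]; ring

lemma H_congr (f : Ω → A) (g : Ω → B) (φ : A → B) (ψ : B → A)
    (hφ : ∀ ω, g ω = φ (f ω)) (hψ : ∀ ω, f ω = ψ (g ω)) : H P f = H P g := by
  have e1 : Function.Injective (fun a : A => (a, φ a)) := fun x y h => congrArg Prod.fst h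
  have e2 : Function.Injective (fun b : B => (ψ b, b)) := fun x y h => congrArg Prod.snd h
  have h1 : H P (fun ω => (f ω, g ω)) = H P f := by
    have : (fun ω => (f ω, g ω)) = fun ω => (fun a : A => (a, φ a)) (f ω) := by
      funext ω; simp [hφ ω]
    rw [this, H_comp_inj P _ e1]
  have h2 : H P (fun ω => (f ω, g ω)) = H P g := by
    have : (fun ω => (f ω, g ω)) = fun ω => (fun b : B => (ψ b, b)) (g ω) := by
      funext ω; simp [hψ ω]
    rw [this, H_comp_inj P _ e2]
  rw [← h1, h2]

end MDC
namespace MDC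
set_option linter.unusedSectionVars false

variable {Ω : Type*} [Fintype Ω] (P : FinProb Ω)
variable {A B C : Type*} [Fintype A] [DecidableEq A] [Fintype B] [DecidableEq B]
  [Fintype C] [DecidableEq C]

lemma indep_snd (f : Ω → A) (g : Ω → B) (h : Ω → C)
    (hi : Indep P f (fun ω => (g ω, h ω))) : Indep P f h := by
  intro a c
  have key : pr P (fun ω => (f ω, h ω)) (a, c)
      = ∑ b, pr P (fun ω => (f ω, g ω, h ω)) (a, b, c) := (pr_marg_mid P f g h a c).symm
  rw [key]
  simp only [Indep] at hi
  simp only [hi]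
  rw [← Finset.mul_sum, pr_marg_snd]

lemma H_indep (f : Ω → A) (g : Ω → B) (hi : Indep P f g) :
    H P (fun ω => (f ω, g ω)) = H P f + H P g := by
  unfold H
  rw [Fintype.sum_prod_type]
  have : ∀ a b, pr P (fun ω => (f ω, g ω)) (a, b)
      * Real.logb 2 (pr P (fun ω => (f ω, g ω)) (a, b))
      = (pr P f a * Real.logb 2 (pr P f a)) * pr P g b
        + pr P f a * (pr P g b * Real.logb 2 (pr P g b)) := by
    intro a b
    rw [show pr P (fun ω => (f ω, g ω)) (a,b) = pr P f a * pr P g b from hi a b]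
    rcases eq_or_ne (pr P f a) 0 with hp | hp
    · simp [hp]
    rcases eq_or_ne (pr P g b) 0 with hq | hq
    · simp [hq]
    rw [Real.logb_mul hp hq]; ring
  simp only [this]
  rw [Finset.sum_congr rfl (fun a _ => Finset.sum_add_distrib),
    Finset.sum_add_distrib]
  simp only [← Finset.mul_sum, ← Finset.sum_mul, sum_pr]
  ring

end MDC
namespace MDC
set_option linter.unusedSectionVars false

variable {Ω : Type*} [Fintype Ω] (P : FinProb Ω)
variable {A B C : Type*} [Fintype A] [DecidableEq A] [Fintype B] [DecidableEq B]
  [Fintype C] [DecidableEq C]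

lemma H_condIndep (f : Ω → A) (g : Ω → B) (h : Ω → C) (hci : CondIndep P f g h) :
    H P (fun ω => (f ω, g ω, h ω))
      = H P (fun ω => (f ω, h ω)) + H P (fun ω => (g ω, h ω)) - H P h := by
  have m1 : ∀ (a : A) (c : C), ∑ b, pr P (fun ω => (f ω, g ω, h ω)) (a, b, c)
      = pr P (fun ω => (f ω, h ω)) (a, c) := fun a c => pr_marg_mid P f g h a c
  have m2 : ∀ (b : B) (c : C), ∑ a, pr P (fun ω => (f ω, g ω, h ω)) (a, b, c)
      = pr P (fun ω => (g ω, h ω)) (b, c) := fun b c => pr_marg_snd P f (fun ω => (g ω, h ω)) (b, c)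
  have m3 : ∀ c : C, ∑ a, pr P (fun ω => (f ω, h ω)) (a, c) = pr P h c :=
    fun c => pr_marg_snd P f h c
  have key : ∀ (a : A) (b : B) (c : C),
      pr P (fun ω => (f ω, g ω, h ω)) (a, b, c)
        * Real.logb 2 (pr P (fun ω => (f ω, g ω, h ω)) (a, b, c))
      = pr P (fun ω => (f ω, g ω, h ω)) (a, b, c)
          * Real.logb 2 (pr P (fun ω => (f ω, h ω)) (a, c))
        + pr P (fun ω => (f ω, g ω, h ω)) (a, b, c)
          * Real.logb 2 (pr P (fun ω => (g ω, h ω)) (b, c))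
        - pr P (fun ω => (f ω, g ω, h ω)) (a, b, c) * Real.logb 2 (pr P h c) := by
    intro a b c
    rcases eq_or_ne (pr P (fun ω => (f ω, g ω, h ω)) (a, b, c)) 0 with ht | ht
    · simp [ht]
    have ht' : 0 < pr P (fun ω => (f ω, g ω, h ω)) (a, b, c) :=
      (pr_nonneg P _ _).lt_of_ne (Ne.symm ht)
    have hts : pr P (fun ω => (f ω, g ω, h ω)) (a, b, c) ≤ pr P (fun ω => (f ω, h ω)) (a, c) :=
      m1 a c ▸ Finset.single_le_sum (f := fun b' => pr P (fun ω => (f ω, g ω, h ω)) (a, b', c)) (fun b' _ => pr_nonneg P _ _) (Finset.mem_univ b)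
    have htu : pr P (fun ω => (f ω, g ω, h ω)) (a, b, c) ≤ pr P (fun ω => (g ω, h ω)) (b, c) :=
      m2 b c ▸ Finset.single_le_sum (f := fun a' => pr P (fun ω => (f ω, g ω, h ω)) (a', b, c)) (fun a' _ => pr_nonneg P _ _) (Finset.mem_univ a)
    have hsr : pr P (fun ω => (f ω, h ω)) (a, c) ≤ pr P h c :=
      m3 c ▸ Finset.single_le_sum (f := fun a' => pr P (fun ω => (f ω, h ω)) (a', c)) (fun a' _ => pr_nonneg P _ _) (Finset.mem_univ a)
    have hs : 0 < pr P (fun ω => (f ω, h ω)) (a, c) := ht'.trans_le hts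
    have hu : 0 < pr P (fun ω => (g ω, h ω)) (b, c) := ht'.trans_le htu
    have hr : 0 < pr P h c := hs.trans_le hsr
    have hprod := hci a b c
    have hteq : pr P (fun ω => (f ω, g ω, h ω)) (a, b, c)
        = pr P (fun ω => (f ω, h ω)) (a, c) * pr P (fun ω => (g ω, h ω)) (b, c) / pr P h c := by
      rw [eq_div_iff hr.ne']
      linarith [hprod]
    have hlog : Real.logb 2 (pr P (fun ω => (f ω, g ω, h ω)) (a, b, c))
        = Real.logb 2 (pr P (fun ω => (f ω, h ω)) (a, c))
          + Real.logb 2 (pr P (fun ω => (g ω, h ω)) (b, c)) - Real.logb 2 (pr P h c) := by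
      rw [hteq, Real.logb_div (mul_ne_zero hs.ne' hu.ne') hr.ne', Real.logb_mul hs.ne' hu.ne']
    rw [hlog]; ring
  unfold H
  simp only [Fintype.sum_prod_type]
  simp only [key]
  simp only [Finset.sum_add_distrib, Finset.sum_sub_distrib]
  have T1 : ∑ a, ∑ b, ∑ c, pr P (fun ω => (f ω, g ω, h ω)) (a, b, c)
        * Real.logb 2 (pr P (fun ω => (f ω, h ω)) (a, c))
      = ∑ a, ∑ c, pr P (fun ω => (f ω, h ω)) (a, c)
        * Real.logb 2 (pr P (fun ω => (f ω, h ω)) (a, c)) := by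
    refine Finset.sum_congr rfl fun a _ => ?_
    rw [Finset.sum_comm]
    refine Finset.sum_congr rfl fun c _ => ?_
    rw [← Finset.sum_mul, m1]
  have T2 : ∑ a, ∑ b, ∑ c, pr P (fun ω => (f ω, g ω, h ω)) (a, b, c)
        * Real.logb 2 (pr P (fun ω => (g ω, h ω)) (b, c))
      = ∑ b, ∑ c, pr P (fun ω => (g ω, h ω)) (b, c)
        * Real.logb 2 (pr P (fun ω => (g ω, h ω)) (b, c)) := by
    rw [Finset.sum_comm]
    refine Finset.sum_congr rfl fun b _ => ?_
    rw [Finset.sum_comm]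
    refine Finset.sum_congr rfl fun c _ => ?_
    rw [← Finset.sum_mul, m2]
  have T3 : ∑ a, ∑ b, ∑ c, pr P (fun ω => (f ω, g ω, h ω)) (a, b, c)
        * Real.logb 2 (pr P h c)
      = ∑ c, pr P h c * Real.logb 2 (pr P h c) := by
    have T3a : ∀ a : A, ∑ b, ∑ c, pr P (fun ω => (f ω, g ω, h ω)) (a, b, c)
          * Real.logb 2 (pr P h c)
        = ∑ c, pr P (fun ω => (f ω, h ω)) (a, c) * Real.logb 2 (pr P h c) := by
      intro a
      rw [Finset.sum_comm]
      refine Finset.sum_congr rfl fun c _ => ?_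
      rw [← Finset.sum_mul, m1]
    simp only [T3a]
    rw [Finset.sum_comm]
    refine Finset.sum_congr rfl fun c _ => ?_
    rw [← Finset.sum_mul, m3]
  rw [T1, T2, T3]
  ring

end MDC
open MDC
/-- Key computation of Theorem 1: substituting X'₂ = (X₂, Z) preserves the
relevant informations, so the EGC vertex rewrites in EGC* form. -/
theorem stmt15 {Ω A B1 B2 B12 C : Type} [Fintype Ω]
    [Fintype A] [DecidableEq A] [Fintype B1] [DecidableEq B1]
    [Fintype B2] [DecidableEq B2] [Fintype B12] [DecidableEq B12]
    [Fintype C] [DecidableEq C]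
    (P : FinProb Ω) (X : Ω → A) (X1 : Ω → B1) (X2 : Ω → B2) (X12 : Ω → B12)
    (Z : Ω → C) (f : B1 → B2 → C → B12)
    (hf : ∀ ω, X12 ω = f (X1 ω) (X2 ω) (Z ω))
    (hZ : Indep P Z (fun ω => (X1 ω, X2 ω)))
    (hmc : CondIndep P X Z (fun ω => (X1 ω, X2 ω, X12 ω))) :
    CMI P X (fun ω => (X2 ω, X12 ω)) X1 = CMI P X (fun ω => (X2 ω, Z ω)) X1 ∧
    MI P X1 X2 = MI P X1 (fun ω => (X2 ω, Z ω)) ∧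
    CMI P X (fun ω => (X2 ω, X12 ω)) X1 + MI P X1 X2
      = MI P X (fun ω => (X1 ω, (X2 ω, Z ω))) - MI P X X1
        + MI P X1 (fun ω => (X2 ω, Z ω)) := by
  -- reorder: ((X2,X12),X1) ≅ (X1,X2,X12)
  have h1 : H P (fun ω => ((X2 ω, X12 ω), X1 ω)) = H P (fun ω => (X1 ω, X2 ω, X12 ω)) :=
    H_congr P _ _ (fun p => (p.2, p.1.1, p.1.2)) (fun w => ((w.2.1, w.2.2), w.1))
      (fun ω => rfl) (fun ω => rfl)
  -- reorder: (X,(X2,X12),X1) ≅ (X,X1,X2,X12)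
  have h2 : H P (fun ω => (X ω, (X2 ω, X12 ω), X1 ω))
      = H P (fun ω => (X ω, X1 ω, X2 ω, X12 ω)) :=
    H_congr P _ _ (fun p => (p.1, p.2.2, p.2.1)) (fun q => (q.1, (q.2.2, q.2.1)))
      (fun ω => rfl) (fun ω => rfl)
  -- reorder: ((X2,Z),X1) ≅ (Z,X1,X2)
  have h3 : H P (fun ω => ((X2 ω, Z ω), X1 ω)) = H P (fun ω => (Z ω, X1 ω, X2 ω)) :=
    H_congr P _ _ (fun p => (p.1.2, p.2, p.1.1)) (fun q => ((q.2.2, q.1), q.2.1))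
      (fun ω => rfl) (fun ω => rfl)
  -- independence: H(Z,X1,X2) = H Z + H(X1,X2)
  have h4 : H P (fun ω => (Z ω, X1 ω, X2 ω)) = H P Z + H P (fun ω => (X1 ω, X2 ω)) :=
    H_indep P Z (fun ω => (X1 ω, X2 ω)) hZ
  -- (X,(X2,Z),X1) ≅ (X,Z,X1,X2,X12)  (uses hf)
  have h5 : H P (fun ω => (X ω, (X2 ω, Z ω), X1 ω))
      = H P (fun ω => (X ω, Z ω, X1 ω, X2 ω, X12 ω)) :=
    H_congr P _ _
      (fun p => (p.1, p.2.1.2, p.2.2, p.2.1.1, f p.2.2 p.2.1.1 p.2.1.2))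
      (fun q => (q.1, (q.2.2.2.1, q.2.1), q.2.2.1))
      (fun ω => by rw [hf ω]) (fun ω => rfl)
  -- Markov chain: H(X,Z,W) = H(X,W) + H(Z,W) - H(W)
  have h6 : H P (fun ω => (X ω, Z ω, X1 ω, X2 ω, X12 ω))
      = H P (fun ω => (X ω, X1 ω, X2 ω, X12 ω))
        + H P (fun ω => (Z ω, X1 ω, X2 ω, X12 ω)) - H P (fun ω => (X1 ω, X2 ω, X12 ω)) :=
    H_condIndep P X Z (fun ω => (X1 ω, X2 ω, X12 ω)) hmc
  -- drop X12: (Z,X1,X2,X12) ≅ (Z,X1,X2)  (uses hf)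
  have h7 : H P (fun ω => (Z ω, X1 ω, X2 ω, X12 ω)) = H P (fun ω => (Z ω, X1 ω, X2 ω)) :=
    H_congr P _ _ (fun p => (p.1, p.2.1, p.2.2.1))
      (fun q => (q.1, q.2.1, q.2.2, f q.2.1 q.2.2 q.1))
      (fun ω => rfl) (fun ω => by rw [hf ω])
  -- swap: (X2,Z) ≅ (Z,X2)
  have h8a : H P (fun ω => (X2 ω, Z ω)) = H P (fun ω => (Z ω, X2 ω)) :=
    H_congr P _ _ (fun p => (p.2, p.1)) (fun q => (q.2, q.1)) (fun ω => rfl) (fun ω => rfl)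
  have h8 : H P (fun ω => (Z ω, X2 ω)) = H P Z + H P X2 :=
    H_indep P Z X2 (indep_snd P Z X1 X2 hZ)
  -- reorder: (X1,X2,Z) ≅ (Z,X1,X2)
  have h9 : H P (fun ω => (X1 ω, X2 ω, Z ω)) = H P (fun ω => (Z ω, X1 ω, X2 ω)) :=
    H_congr P _ _ (fun p => (p.2.2, p.1, p.2.1)) (fun q => (q.2.1, q.2.2, q.1))
      (fun ω => rfl) (fun ω => rfl)
  -- (X,X1,X2,Z) ≅ (X,Z,X1,X2,X12)  (uses hf)
  have h10 : H P (fun ω => (X ω, X1 ω, X2 ω, Z ω))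
      = H P (fun ω => (X ω, Z ω, X1 ω, X2 ω, X12 ω)) :=
    H_congr P _ _
      (fun p => (p.1, p.2.2.2, p.2.1, p.2.2.1, f p.2.1 p.2.2.1 p.2.2.2))
      (fun q => (q.1, q.2.2.1, q.2.2.2.1, q.2.1))
      (fun ω => by rw [hf ω]) (fun ω => rfl)
  refine ⟨?_, ?_, ?_⟩ <;> simp only [CMI, MI] <;> linarith
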